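/- arXiv:1712.03582 — 5 statements merged into one kernel-verified Lean document; each statement's English description precedes it below -/
import Mathlib

section
/- Let G be a torsion-free group and f : G → G an endomorphism whose image f(G) has finite index in G. If x is a non-trivial element of the kernel of f, then there exists an element y of G lying in the kernel of f² but not in the kernel of f. -/
/-! Some positive power `x ^ n` lies in the finite-index subgroup `f(G)`, say `x ^ n = f y`.
Then `f (f y) = (f x) ^ n = 1`, while `f y = x ^ n ≠ 1` because `x` has infinite order. -/

/-- `Monoid.IsTorsionFree` as it was defined in Mathlib (Dec 2024); removed since. -/
def Monoid.IsTorsionFree (G : Type*) [Monoid G] : Prop :=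
  ∀ g : G, g ≠ 1 → ¬IsOfFinOrder g

theorem stmt0 {G : Type*} [Group G] (htf : Monoid.IsTorsionFree G)
    (f : G →* G) (hfin : f.range.FiniteIndex)
    (x : G) (hx : x ∈ f.ker) (hx1 : x ≠ 1) :
    ∃ y : G, y ∈ (f.comp f).ker ∧ y ∉ f.ker := by
  obtain ⟨n, hn, -, y, hy⟩ := Subgroup.exists_pow_mem_of_index_ne_zero hfin.index_ne_zero x
  refine ⟨y, ?_, fun hy1 => htf x hx1 ?_⟩
  · rw [MonoidHom.mem_ker, MonoidHom.comp_apply, hy, map_pow, MonoidHom.mem_ker.mp hx, one_pow]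
  · exact isOfFinOrder_iff_pow_eq_one.mpr ⟨n, hn, hy ▸ hy1⟩
end

section
/- Let G be a torsion-free group and f : G → G an endomorphism with non-trivial kernel whose image has finite index in G. Then the chain of kernels ker(f) ⊆ ker(f²) ⊆ ker(f³) ⊆ ⋯ is strictly increasing: for every m ≥ 1, ker(f^m) is a proper subgroup of ker(f^{m+1}). -/
/-!
If `ker (f^(m+1)) = ker (f^m)`, then `ker f` meets the range of `f^m` trivially. That range has
finite index, so every element of `ker f` has a nontrivial power in it; torsion-freeness then
forces `ker f = ⊥`.
-/

theorem Subgroup.eq_bot_of_disjoint_of_finiteIndex {G : Type*} [Group G]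
    (htf : Monoid.IsTorsionFree G) {N H : Subgroup G} [H.FiniteIndex] (hNH : Disjoint N H) :
    N = ⊥ := by
  refine (eq_bot_iff_forall N).mpr fun x hx => ?_
  by_contra hx1
  obtain ⟨k, hk, -, hkH⟩ := exists_pow_mem_of_index_ne_zero (FiniteIndex.index_ne_zero (H := H)) x
  have hk1 : x ^ k = 1 := (disjoint_def.mp hNH) (pow_mem hx k) hkH
  exact htf x hx1 (isOfFinOrder_iff_pow_eq_one.mpr ⟨k, hk, hk1⟩)

namespace MonoidHom

variable {G G' G'' : Type*} [Group G] [Group G'] [Group G'']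

theorem finiteIndex_range_comp (g : G' →* G'') (f : G →* G') [f.range.FiniteIndex]
    [g.range.FiniteIndex] : (g.comp f).range.FiniteIndex := by
  refine ⟨?_⟩
  rw [range_comp, Subgroup.index_map]
  exact mul_ne_zero (Subgroup.finiteIndex_of_le le_sup_left).index_ne_zero
    Subgroup.FiniteIndex.index_ne_zero

theorem ker_lt_ker_comp (htf : Monoid.IsTorsionFree G') {g : G' →* G''} {f : G →* G'}
    (hg : g.ker ≠ ⊥) [f.range.FiniteIndex] : f.ker < (g.comp f).ker := by
  rw [← comap_ker]
  refine (Subgroup.ker_le_comap _ _).lt_of_ne fun heq => hg ?_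
  exact Subgroup.eq_bot_of_disjoint_of_finiteIndex htf (Subgroup.comap_eq_ker.mp heq.symm)

end MonoidHom

theorem Monoid.End.finiteIndex_range_pow {G : Type*} [Group G] (f : Monoid.End G)
    [(f : G →* G).range.FiniteIndex] (n : ℕ) :
    ((f ^ n : Monoid.End G) : G →* G).range.FiniteIndex := by
  induction n with
  | zero =>
    show (MonoidHom.id G).range.FiniteIndex
    rw [MonoidHom.range_eq_top_of_surjective _ Function.surjective_id]
    infer_instance
  | succ n ih =>
    rw [pow_succ']
    exact MonoidHom.finiteIndex_range_comp (f : G →* G) _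

theorem stmt1 {G : Type*} [Group G] (htf : Monoid.IsTorsionFree G)
    (f : Monoid.End G) (hker : (f : G →* G).ker ≠ ⊥)
    (hfin : (f : G →* G).range.FiniteIndex) :
    ∀ m : ℕ, 1 ≤ m → ((f ^ m : Monoid.End G) : G →* G).ker < ((f ^ (m + 1) : Monoid.End G) : G →* G).ker := by
  intro m _
  have := f.finiteIndex_range_pow m
  rw [pow_succ']
  exact MonoidHom.ker_lt_ker_comp htf hker
end

section
/- Let Γ be a group whose center Z(Γ) is infinite cyclic with generator z, and let f : Γ → Γ be an endomorphism such that f(z) = z^d with |d| ≥ 2 and such that the induced endomorphism of Γ/Z(Γ) is an automorphism. Then z does not belong to the image f(Γ); in particular f(Γ) is a proper subgroup of Γ. -/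
/-!
If `f g = z`, then `g` is central because `f` induces an injective map on `Γ / Z(Γ)`, so
`g = z ^ k`. Then `z = f (z ^ k) = z ^ (d * k)`, and as `z` has infinite order, `d * k = 1`,
contradicting `|d| ≥ 2`.
-/

theorem QuotientGroup.mem_of_map_mem_of_injective {G : Type*} [Group G] {N : Subgroup G}
    [N.Normal] {f : G →* G} {fbar : G ⧸ N →* G ⧸ N}
    (hcomm : ∀ x : G, fbar (QuotientGroup.mk x) = QuotientGroup.mk (f x))
    (hinj : Function.Injective fbar) {x : G} (hx : f x ∈ N) : x ∈ N := by
  rw [← QuotientGroup.eq_one_iff] at hx ⊢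
  exact hinj (by rw [hcomm, hx, map_one])

theorem notMem_range_of_map_eq_zpow {G : Type*} [Group G] {z : G} (hz : ¬ IsOfFinOrder z)
    {f : G →* G} {d : ℤ} (hd : 2 ≤ |d|) (hfz : f z = z ^ d)
    (hpre : ∀ x, f x ∈ Subgroup.zpowers z → x ∈ Subgroup.zpowers z) : z ∉ f.range := by
  rintro ⟨g, hg⟩
  obtain ⟨k, rfl⟩ := hpre g (hg ▸ Subgroup.mem_zpowers z)
  have hdk : d * k = 1 := by
    apply injective_zpow_iff_not_isOfFinOrder.mpr hz
    simp only [zpow_one, zpow_mul, ← hfz, ← map_zpow, hg]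
  have : |d| = 1 := Int.isUnit_iff_abs_eq.mp (IsUnit.of_mul_eq_one k hdk)
  omega

theorem stmt11 {Γ : Type*} [Group Γ] (z : Γ)
    (hz : Subgroup.center Γ = Subgroup.zpowers z) (hzinf : ¬ IsOfFinOrder z)
    (f : Γ →* Γ) (d : ℤ) (hd : 2 ≤ |d|) (hfz : f z = z ^ d)
    (fbar : Γ ⧸ Subgroup.center Γ →* Γ ⧸ Subgroup.center Γ)
    (hcomm : ∀ x : Γ, fbar (QuotientGroup.mk x) = QuotientGroup.mk (f x))
    (hbij : Function.Bijective fbar) :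
    z ∉ f.range ∧ f.range ≠ ⊤ := by
  have hpre : ∀ x, f x ∈ Subgroup.zpowers z → x ∈ Subgroup.zpowers z := by
    simpa only [← hz] using fun x => QuotientGroup.mem_of_map_mem_of_injective hcomm hbij.1
  have hz_notMem : z ∉ f.range := notMem_range_of_map_eq_zpow hzinf hd hfz hpre
  exact ⟨hz_notMem, fun htop => hz_notMem (htop ▸ Subgroup.mem_top z)⟩
end

section
/- Let Γ be a group with infinite cyclic center generated by z, and let f : Γ → Γ be an endomorphism with f(z) = z^{d} for |d| ≥ 2 that induces an automorphism on Γ/Z(Γ). Then the images of the iterates form a strictly decreasing chain: f^{m+1}(Γ) is a proper subgroup of f^m(Γ) for all m ≥ 0. -/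
/-! Since `f` is injective modulo the centre `⟨z⟩` and multiplies exponents of `z` by `d ≠ 0`, it is
injective; and `z` is not in its image, since `f (z ^ k) = z ^ (d * k) = z` would force `d * k = 1`.
So `f(Γ) < Γ`, and applying the injective map `f ^ m` preserves this strict inclusion. -/

theorem Subgroup.comap_le_of_injective_quotient {G : Type*} [Group G] {N : Subgroup G} [N.Normal]
    (f : G →* G) (fbar : G ⧸ N →* G ⧸ N)
    (hcomm : ∀ x : G, fbar (QuotientGroup.mk x) = QuotientGroup.mk (f x))
    (hinj : Function.Injective fbar) : N.comap f ≤ N := by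
  intro x hx
  rw [Subgroup.mem_comap, ← QuotientGroup.eq_one_iff] at hx
  rw [← QuotientGroup.eq_one_iff]
  exact hinj (by rw [hcomm, hx, map_one])

section CyclicCentre

variable {Γ : Type*} [Group Γ] {z : Γ} {f : Γ →* Γ} {d : ℤ}

theorem exists_zpow_eq_of_map_eq_zpow (hz : Subgroup.center Γ = Subgroup.zpowers z)
    (hfz : f z = z ^ d) (hf : (Subgroup.center Γ).comap f ≤ Subgroup.center Γ)
    {x : Γ} {n : ℤ} (hx : f x = z ^ n) : ∃ k : ℤ, x = z ^ k ∧ z ^ (d * k) = z ^ n := by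
  have hxc : x ∈ Subgroup.center Γ := hf <| by
    rw [Subgroup.mem_comap, hx, hz]
    exact Subgroup.zpow_mem_zpowers z n
  rw [hz, Subgroup.mem_zpowers_iff] at hxc
  obtain ⟨k, rfl⟩ := hxc
  exact ⟨k, rfl, by rw [zpow_mul, ← hfz, ← map_zpow, hx]⟩

theorem injective_of_map_generator_eq_zpow (hz : Subgroup.center Γ = Subgroup.zpowers z)
    (hzinf : ¬ IsOfFinOrder z) (hd : d ≠ 0) (hfz : f z = z ^ d)
    (hf : (Subgroup.center Γ).comap f ≤ Subgroup.center Γ) : Function.Injective f := by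
  rw [injective_iff_map_eq_one]
  intro x hx
  obtain ⟨k, rfl, hk⟩ := exists_zpow_eq_of_map_eq_zpow hz hfz hf (n := 0) (by rw [hx, zpow_zero])
  have hdk : d * k = 0 := injective_zpow_iff_not_isOfFinOrder.2 hzinf hk
  rw [(mul_eq_zero.1 hdk).resolve_left hd, zpow_zero]

theorem generator_notMem_range_of_map_eq_zpow (hz : Subgroup.center Γ = Subgroup.zpowers z)
    (hzinf : ¬ IsOfFinOrder z) (hd : 2 ≤ |d|) (hfz : f z = z ^ d)
    (hf : (Subgroup.center Γ).comap f ≤ Subgroup.center Γ) : z ∉ f.range := by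
  rintro ⟨x, hx⟩
  obtain ⟨k, -, hk⟩ := exists_zpow_eq_of_map_eq_zpow hz hfz hf (n := 1) (by rw [hx, zpow_one])
  have hdk : d * k = 1 := injective_zpow_iff_not_isOfFinOrder.2 hzinf hk
  rcases Int.eq_one_or_neg_one_of_mul_eq_one hdk with rfl | rfl <;> norm_num at hd

end CyclicCentre

theorem MonoidHom.range_comp_lt_range {G H K : Type*} [Group G] [Group H] [Group K]
    {g : H →* K} {f : G →* H} (hg : Function.Injective g) (hf : f.range < ⊤) :
    (g.comp f).range < g.range := by
  rwa [MonoidHom.range_comp, MonoidHom.range_eq_map g, Subgroup.map_lt_map_iff_of_injective hg]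

theorem Monoid.End.range_pow_succ_lt_of_injective {G : Type*} [Group G] {f : Monoid.End G}
    (hf : Function.Injective f) (hrange : (f : G →* G).range < ⊤) (m : ℕ) :
    ((f ^ (m + 1) : Monoid.End G) : G →* G).range < ((f ^ m : Monoid.End G) : G →* G).range := by
  have hfm : Function.Injective (f ^ m : Monoid.End G) := by
    rw [Monoid.End.coe_pow]
    exact hf.iterate m
  rw [pow_succ]
  exact MonoidHom.range_comp_lt_range hfm hrange

theorem stmt12 {Γ : Type*} [Group Γ] (z : Γ)
    (hz : Subgroup.center Γ = Subgroup.zpowers z) (hzinf : ¬ IsOfFinOrder z)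
    (f : Monoid.End Γ) (d : ℤ) (hd : 2 ≤ |d|) (hfz : f z = z ^ d)
    (fbar : Γ ⧸ Subgroup.center Γ →* Γ ⧸ Subgroup.center Γ)
    (hcomm : ∀ x : Γ, fbar (QuotientGroup.mk x) = QuotientGroup.mk (f x))
    (hbij : Function.Bijective fbar) :
    ∀ m : ℕ, ((f ^ (m + 1) : Monoid.End Γ) : Γ →* Γ).range < ((f ^ m : Monoid.End Γ) : Γ →* Γ).range := by
  have hf : (Subgroup.center Γ).comap (f : Γ →* Γ) ≤ Subgroup.center Γ :=
    Subgroup.comap_le_of_injective_quotient f fbar hcomm hbij.1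
  have hd0 : d ≠ 0 := by rintro rfl; norm_num at hd
  refine Monoid.End.range_pow_succ_lt_of_injective
    (injective_of_map_generator_eq_zpow hz hzinf hd0 hfz hf) ?_
  exact lt_top_iff_ne_top.2 fun htop =>
    generator_notMem_range_of_map_eq_zpow hz hzinf hd hfz hf (htop ▸ Subgroup.mem_top z)
end

section
/- Let 1 → C → Γ → Q → 1 be a central extension of groups where C is infinite cyclic, equal to the full center of Γ, and Q is a Hopfian group with trivial center. Then Γ is Hopfian: every surjective endomorphism of Γ is an isomorphism. -/
/-!
A surjective endomorphism `φ` of `Γ` preserves the center `Z`, so it induces a surjective, hence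
bijective, endomorphism of the Hopfian group `Γ ⧸ Z`. Injectivity there means `φ⁻¹(Z) ⊆ Z`, so `φ`
restricts to a surjective endomorphism of `Z ≅ ℤ`, which is therefore injective. A kernel element
of `φ` lies in `φ⁻¹(Z) ⊆ Z`, where `φ` is injective.
-/

theorem IsCyclic.injective_of_surjective {G : Type*} [Group G] [IsCyclic G] [Infinite G]
    {f : G →* G} (hf : Function.Surjective f) : Function.Injective f := by
  obtain ⟨m, hm⟩ := f.map_cyclic
  obtain ⟨ξ, hξ⟩ := IsCyclic.exists_generator (α := G)
  have hξ_inj : Function.Injective (ξ ^ · : ℤ → G) :=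
    injective_zpow_iff_not_isOfFinOrder.mpr <| orderOf_eq_zero_iff.mp <|
      Infinite.orderOf_eq_zero_of_forall_mem_zpowers hξ
  have hm0 : m ≠ 0 := by
    rintro rfl
    obtain ⟨g, hg⟩ := exists_ne (1 : G)
    obtain ⟨y, rfl⟩ := hf g
    exact hg (by rw [hm, zpow_zero])
  intro x y hxy
  obtain ⟨a, rfl⟩ := hξ x
  obtain ⟨b, rfl⟩ := hξ y
  rw [hm, hm, ← zpow_mul, ← zpow_mul] at hxy
  exact congrArg (ξ ^ ·) (mul_right_cancel₀ hm0 (hξ_inj hxy))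

namespace Subgroup

theorem center_le_comap_center_of_surjective {G H : Type*} [Group G] [Group H] {φ : G →* H}
    (hφ : Function.Surjective φ) : center G ≤ (center H).comap φ := by
  intro z hz
  rw [mem_comap, mem_center_iff]
  intro y
  obtain ⟨x, rfl⟩ := hφ y
  rw [← map_mul, ← map_mul, mem_center_iff.mp hz x]

variable {G : Type*} [Group G] {N : Subgroup G} {φ : G →* G}

theorem comap_le_of_injective_quotientMap [N.Normal] (hN : N ≤ N.comap φ)
    (hinj : Function.Injective (QuotientGroup.map N N φ hN)) : N.comap φ ≤ N := by
  intro g hg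
  have hφg : (φ g : G ⧸ N) = 1 := (QuotientGroup.eq_one_iff _).mpr hg
  rw [← QuotientGroup.eq_one_iff]
  exact hinj (by rw [QuotientGroup.map_mk, hφg, map_one])

theorem surjective_restrict_of_comap_le (hφ : Function.Surjective φ) (hN : N ≤ N.comap φ)
    (hcomap : N.comap φ ≤ N) :
    Function.Surjective ((φ.domRestrict N).codRestrict N fun x => hN x.2) := by
  rintro ⟨z, hz⟩
  obtain ⟨g, rfl⟩ := hφ z
  exact ⟨⟨g, hcomap hz⟩, rfl⟩

theorem injective_of_injective_restrict_of_comap_le (hN : N ≤ N.comap φ) (hcomap : N.comap φ ≤ N)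
    (hres : Function.Injective ((φ.domRestrict N).codRestrict N fun x => hN x.2)) :
    Function.Injective φ := by
  rw [injective_iff_map_eq_one] at hres ⊢
  intro g hg
  have hgN : g ∈ N := hcomap (by rw [mem_comap, hg]; exact N.one_mem)
  exact congrArg Subtype.val (hres ⟨g, hgN⟩ (Subtype.ext hg))

end Subgroup

theorem stmt15_general {Γ : Type*} [Group Γ]
    [IsCyclic ↥(Subgroup.center Γ)] [Infinite ↥(Subgroup.center Γ)]
    (hQhopf : ∀ g : (Γ ⧸ Subgroup.center Γ) →* (Γ ⧸ Subgroup.center Γ),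
      Function.Surjective g → Function.Injective g) :
    ∀ φ : Γ →* Γ, Function.Surjective φ → Function.Injective φ := by
  intro φ hφ
  have hZ := Subgroup.center_le_comap_center_of_surjective hφ
  have hQ_surj : Function.Surjective (QuotientGroup.map _ _ φ hZ) :=
    QuotientGroup.map_surjective_of_surjective _ _ φ (QuotientGroup.mk_surjective.comp hφ) hZ
  have hcomap := Subgroup.comap_le_of_injective_quotientMap hZ (hQhopf _ hQ_surj)
  exact Subgroup.injective_of_injective_restrict_of_comap_le hZ hcomap <|
    IsCyclic.injective_of_surjective (Subgroup.surjective_restrict_of_comap_le hφ hZ hcomap)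

theorem stmt15 {Γ : Type*} [Group Γ]
    [IsCyclic ↥(Subgroup.center Γ)] [Infinite ↥(Subgroup.center Γ)]
    (hQcenter : Subgroup.center (Γ ⧸ Subgroup.center Γ) = ⊥)
    (hQhopf : ∀ g : (Γ ⧸ Subgroup.center Γ) →* (Γ ⧸ Subgroup.center Γ),
      Function.Surjective g → Function.Injective g) :
    ∀ φ : Γ →* Γ, Function.Surjective φ → Function.Injective φ :=
  stmt15_general hQhopf
end
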